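/- Let a, b, θ be real numbers with |a| ≤ 1, |b| ≤ 1 and |θ| ≤ 1. Then (1 + θa)(1 + θb) ≥ (1 − θ²)·√(1 − a²)·√(1 − b²). -/

import Mathlib

theorem sqrt_one_sub_sq_mul_sqrt_one_sub_sq_le {x y : ℝ} (hx : |x| ≤ 1) (hy : |y| ≤ 1) :
    Real.sqrt (1 - x ^ 2) * Real.sqrt (1 - y ^ 2) ≤ 1 + x * y := by
  have hx2 : 0 ≤ 1 - x ^ 2 := by nlinarith [sq_abs x, abs_nonneg x]
  have hxy : |x * y| ≤ 1 := by
    rw [abs_mul]; exact mul_le_one₀ hx (abs_nonneg y) hy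
  rw [← Real.sqrt_mul hx2, Real.sqrt_le_iff]
  constructor
  · linarith [neg_abs_le (x * y)]
  · -- `(1 + x y)² - (1 - x²)(1 - y²) = (x + y)²`
    nlinarith [sq_nonneg (x + y)]

theorem section6_key_inequality
    (a b θ : ℝ) (ha : |a| ≤ 1) (hb : |b| ≤ 1) (hθ : |θ| ≤ 1) :
    (1 - θ ^ 2) * Real.sqrt (1 - a ^ 2) * Real.sqrt (1 - b ^ 2) ≤
      (1 + θ * a) * (1 + θ * b) := by
  have hθ2 : 0 ≤ 1 - θ ^ 2 := by nlinarith [sq_abs θ, abs_nonneg θ]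
  have hθa := sqrt_one_sub_sq_mul_sqrt_one_sub_sq_le hθ ha
  have hθb := sqrt_one_sub_sq_mul_sqrt_one_sub_sq_le hθ hb
  calc (1 - θ ^ 2) * Real.sqrt (1 - a ^ 2) * Real.sqrt (1 - b ^ 2)
      = (Real.sqrt (1 - θ ^ 2) * Real.sqrt (1 - a ^ 2)) *
          (Real.sqrt (1 - θ ^ 2) * Real.sqrt (1 - b ^ 2)) := by
        linear_combination
          -(Real.sqrt (1 - a ^ 2) * Real.sqrt (1 - b ^ 2)) * Real.mul_self_sqrt hθ2
    _ ≤ (1 + θ * a) * (1 + θ * b) :=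
        mul_le_mul hθa hθb (by positivity) (le_trans (by positivity) hθa)
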